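/- Let N = m·b with m ≥ 2 an integer, and let H ~ BWE_{N,b} be a four-moment Gaussian-matching real symmetric banded Wigner matrix of bandwidth b. Then E[tr(H^4)] = (24Nb^2 − 18Nb + 3N − 20b^3 + 27b^2 − 7b)/3. -/

import Mathlib

/-!
Expand `tr H⁴ = ∑ H i j * H j k * H k l * H l i` over closed walks `i → j → k → l → i`. Each
entry in the band is one of the independent entries, and for independent centred variables with
`E X² = 1` and `E X⁴ = 3` the four-fold moment is given by Wick's formula
`E[X_a X_b X_c X_d] = δ_ab δ_cd + δ_ac δ_bd + δ_ad δ_bc`. Hence a walk inside the band contributes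
the number of ways to pair its steps along equal edges, and summing over walks gives
`∑ i, (2 d_i² + d_i)` with `d_i = #{j | |i - j| < b}`. Finally `d_i` is `b + i` on the first
`b - 1` rows, `2b - 1` in the middle and symmetric at the bottom.
-/

open MeasureTheory ProbabilityTheory Finset

namespace ProbabilityTheory

variable {Ω ι : Type*} [MeasurableSpace Ω] {μ : Measure Ω} {X : ι → Ω → ℝ}

lemma iIndepFun.integral_mul_mul_mul_eq_zero_of_notMem [DecidableEq ι]
    (hX : iIndepFun X μ) (hmeas : ∀ i, Measurable (X i)) {a b c d : ι}
    (hmean : ∫ ω, X a ω ∂μ = 0) (ha : a ∉ ({b, c, d} : Finset ι)) :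
    ∫ ω, X a ω * X b ω * X c ω * X d ω ∂μ = 0 := by
  have hind := hX.indepFun_finset {a} {b, c, d} (disjoint_singleton_left.2 ha) hmeas
  have hb : b ∈ ({b, c, d} : Finset ι) := by simp
  have hc : c ∈ ({b, c, d} : Finset ι) := by simp
  have hd : d ∈ ({b, c, d} : Finset ι) := by simp
  have key := hind.integral_fun_comp_mul_comp (f := fun y => y ⟨a, mem_singleton_self a⟩)
    (g := fun z => z ⟨b, hb⟩ * z ⟨c, hc⟩ * z ⟨d, hd⟩)
    (by fun_prop) (by fun_prop) (Measurable.aestronglyMeasurable (by fun_prop))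
    (Measurable.aestronglyMeasurable (by fun_prop))
  simpa only [hmean, zero_mul, ← mul_assoc] using key

lemma iIndepFun.integral_sq_mul_sq (hX : iIndepFun X μ) (hmeas : ∀ i, Measurable (X i))
    {a b : ι} (hab : a ≠ b) :
    ∫ ω, X a ω ^ 2 * X b ω ^ 2 ∂μ = (∫ ω, X a ω ^ 2 ∂μ) * ∫ ω, X b ω ^ 2 ∂μ :=
  (hX.indepFun hab).integral_fun_comp_mul_comp (hmeas a).aemeasurable (hmeas b).aemeasurable
    (f := fun x => x ^ 2) (g := fun x => x ^ 2) (by fun_prop) (by fun_prop)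

theorem iIndepFun.integral_mul_mul_mul_eq_wick [DecidableEq ι]
    (hX : iIndepFun X μ) (hmeas : ∀ i, Measurable (X i))
    (h1 : ∀ i, ∫ ω, X i ω ∂μ = 0) (h2 : ∀ i, ∫ ω, X i ω ^ 2 ∂μ = 1)
    (h4 : ∀ i, ∫ ω, X i ω ^ 4 ∂μ = 3) (a b c d : ι) :
    ∫ ω, X a ω * X b ω * X c ω * X d ω ∂μ =
      (if a = b ∧ c = d then 1 else 0) + (if a = c ∧ b = d then 1 else 0)
        + (if a = d ∧ b = c then 1 else 0) := by
  have isolated : ∀ {x y z w : ι}, x ∉ ({y, z, w} : Finset ι) →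
      ∫ ω, X x ω * X y ω * X z ω * X w ω ∂μ = 0 :=
    fun hx => hX.integral_mul_mul_mul_eq_zero_of_notMem hmeas (h1 _) hx
  have pair : ∀ {x y : ι}, x ≠ y → ∫ ω, X x ω ^ 2 * X y ω ^ 2 ∂μ = 1 := fun hxy => by
    rw [hX.integral_sq_mul_sq hmeas hxy, h2, h2, one_mul]
  -- Unless the four indices coincide or form two pairs, one of them occurs only once.
  by_cases hab : a = b
  · subst hab
    by_cases hcd : c = d
    · subst hcd
      by_cases hac : a = c
      · subst hac
        calc _ = ∫ ω, X a ω ^ 4 ∂μ := by congr 1; ext ω; ring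
          _ = _ := by rw [h4]; norm_num
      · calc _ = ∫ ω, X a ω ^ 2 * X c ω ^ 2 ∂μ := by congr 1; ext ω; ring
          _ = _ := by rw [pair hac]; simp [hac]
    · by_cases hac : a = c
      · subst hac
        calc _ = ∫ ω, X d ω * X a ω * X a ω * X a ω ∂μ := by congr 1; ext ω; ring
          _ = _ := by
            rw [isolated (by simpa [eq_comm] using hcd)]
            simp [hcd]
      · calc _ = ∫ ω, X c ω * X a ω * X a ω * X d ω ∂μ := by congr 1; ext ω; ring
          _ = _ := by
            rw [isolated (by simp [Ne.symm hac, hcd])]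
            simp [hcd, hac]
  by_cases hac : a = c
  · subst hac
    by_cases hbd : b = d
    · subst hbd
      calc _ = ∫ ω, X a ω ^ 2 * X b ω ^ 2 ∂μ := by congr 1; ext ω; ring
        _ = _ := by rw [pair hab]; simp [hab]
    · calc _ = ∫ ω, X b ω * X a ω * X a ω * X d ω ∂μ := by congr 1; ext ω; ring
        _ = _ := by
          rw [isolated (by simp [Ne.symm hab, hbd])]
          simp [hab, hbd, Ne.symm hab]
  by_cases had : a = d
  · subst had
    by_cases hbc : b = c
    · subst hbc
      calc _ = ∫ ω, X a ω ^ 2 * X b ω ^ 2 ∂μ := by congr 1; ext ω; ring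
        _ = _ := by rw [pair hab]; simp [hab]
    · calc _ = ∫ ω, X b ω * X a ω * X c ω * X a ω ∂μ := by congr 1; ext ω; ring
        _ = _ := by
          rw [isolated (by simp [Ne.symm hab, hbc])]
          simp [hab, hbc, Ne.symm hab]
  rw [isolated (by simp [hab, hac, had])]
  simp [hab, hac, had]

end ProbabilityTheory

/-- The number of ways to split the four steps of the closed walk `i → j → k → l → i` into two
pairs of steps along the same edge (three when the walk goes back and forth along one edge). -/
def cyclePairings {n : Type*} [DecidableEq n] (i j k l : n) : ℝ :=
  (if i = k then 1 else 0) + (if i = k ∧ j = l then 1 else 0) + (if j = l then 1 else 0)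

theorem sum_cycle_mul_cyclePairings {n : Type*} [Fintype n] [DecidableEq n] (χ : n → n → ℝ)
    (hsymm : ∀ i j, χ i j = χ j i) (hidem : ∀ i j, χ i j * χ i j = χ i j) :
    ∑ i, ∑ k, ∑ l, ∑ j, χ i j * χ j k * χ k l * χ l i * cyclePairings i j k l
      = ∑ i, (2 * (∑ j, χ i j) ^ 2 + ∑ j, χ i j) := by
  have hχ : ∀ i j, χ i j * χ j i = χ i j := fun i j => by rw [← hsymm i j, hidem]
  have t1 : ∀ i j l, χ i j * χ j i * χ i l * χ l i = χ i j * χ i l := fun i j l => by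
    rw [mul_assoc _ (χ i l), hχ, hχ]
  have t3 : ∀ i j k, χ i j * χ j k * χ k j * χ j i = χ j i * χ j k := fun i j k => by
    rw [hsymm i j, mul_assoc (χ j i), hχ, mul_right_comm, hidem]
  simp only [cyclePairings, mul_add, sum_add_distrib, mul_ite, mul_one, mul_zero, ite_and,
    sum_ite_irrel, sum_const_zero, sum_ite_eq, sum_ite_eq', mem_univ, if_true]
  have T1 : ∀ i, ∑ l, ∑ j, χ i j * χ j i * χ i l * χ l i = (∑ j, χ i j) ^ 2 := fun i => by
    simp only [t1]; rw [sum_comm, sq, sum_mul_sum]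
  have T2 : ∀ i, ∑ j, χ i j * χ j i * χ i j * χ j i = ∑ j, χ i j := fun i => by
    simp only [t1, hidem]
  have T3 : ∑ i, ∑ k, ∑ j, χ i j * χ j k * χ k j * χ j i = ∑ j, (∑ i, χ j i) ^ 2 := by
    simp only [t3]; rw [sum_comm_cycle]; simp only [sq, sum_mul_sum]
  simp only [T1, T2, T3, ← mul_sum]
  ring

theorem Matrix.trace_pow_four {n R : Type*} [Fintype n] [DecidableEq n] [CommSemiring R]
    (A : Matrix n n R) :
    (A ^ 4).trace = ∑ i, ∑ k, ∑ l, ∑ j, A i j * A j k * A k l * A l i := by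
  rw [show A ^ 4 = A * A * (A * A) by noncomm_ring]
  simp only [Matrix.trace, Matrix.diag, Matrix.mul_apply, sum_mul, mul_sum, mul_assoc]

theorem abs_mul_mul_mul_le_sum_pow_four (w x y z : ℝ) :
    |w * x * y * z| ≤ w ^ 4 + x ^ 4 + y ^ 4 + z ^ 4 := by
  have hwx := two_mul_le_add_sq (w ^ 2) (x ^ 2)
  have hyz := two_mul_le_add_sq (y ^ 2) (z ^ 2)
  have h := two_mul_le_add_sq |w * x| |y * z|
  rw [sq_abs, sq_abs] at h
  rw [mul_assoc, abs_mul]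
  nlinarith

section SupportEdge

variable {n : Type*} [LinearOrder n] {r : n → n → Prop}

def supportEdge (hr : ∀ i j, r i j → r j i) (i j : n) (h : r i j) :
    {p : n × n // p.1 ≤ p.2 ∧ r p.1 p.2} :=
  ⟨(min i j, max i j), min_le_max, by
    rcases le_total i j with hij | hij <;> simp [hij, h, hr i j h]⟩

theorem supportEdge_eq_iff (hr : ∀ i j, r i j → r j i) {i j k l : n} (h : r i j) (h' : r k l) :
    supportEdge hr i j h = supportEdge hr k l h' ↔ s(i, j) = s(k, l) := by
  rw [← Sym2.inf_eq_inf_and_sup_eq_sup]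
  simp [supportEdge, Subtype.ext_iff]

theorem Matrix.IsSymm.apply_supportEdge {R : Type*} {A : Matrix n n R} (hA : A.IsSymm)
    (hr : ∀ i j, r i j → r j i) {i j : n} (h : r i j) :
    A (supportEdge hr i j h).1.1 (supportEdge hr i j h).1.2 = A i j := by
  rcases le_total i j with hij | hij
  · simp [supportEdge, hij]
  · simp [supportEdge, hij, hA.apply i j]

end SupportEdge

structure IsGaussianMomentWigner {Ω n : Type*} [MeasurableSpace Ω] [LinearOrder n]
    (r : n → n → Prop) (H : Ω → Matrix n n ℝ) (μ : Measure Ω) : Prop where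
  measurable : ∀ i j, Measurable fun ω => H ω i j
  isSymm : ∀ ω, (H ω).IsSymm
  eq_zero : ∀ ω i j, ¬ r i j → H ω i j = 0
  iIndepFun : iIndepFun (fun p : {p : n × n // p.1 ≤ p.2 ∧ r p.1 p.2} => fun ω => H ω p.1.1 p.1.2) μ
  integral_eq_zero : ∀ i j, r i j → ∫ ω, H ω i j ∂μ = 0
  integral_sq : ∀ i j, r i j → ∫ ω, H ω i j ^ 2 ∂μ = 1
  integral_pow_four : ∀ i j, r i j → ∫ ω, H ω i j ^ 4 ∂μ = 3

def supportIndicator {n : Type*} (r : n → n → Prop) [DecidableRel r] (i j : n) : ℝ :=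
  if r i j then 1 else 0

namespace IsGaussianMomentWigner

variable {Ω n : Type*} [MeasurableSpace Ω] [LinearOrder n] {r : n → n → Prop}
  {H : Ω → Matrix n n ℝ} {μ : Measure Ω}

theorem integral_cycle [DecidableRel r] (hW : IsGaussianMomentWigner r H μ)
    (hr : ∀ i j, r i j → r j i) (i j k l : n) :
    ∫ ω, H ω i j * H ω j k * H ω k l * H ω l i ∂μ
      = supportIndicator r i j * supportIndicator r j k * supportIndicator r k l
          * supportIndicator r l i * cyclePairings i j k l := by
  by_cases hcycle : r i j ∧ r j k ∧ r k l ∧ r l i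
  · obtain ⟨h1, h2, h3, h4⟩ := hcycle
    have entry : ∀ {a c} (h : r a c) ω, H ω a c
        = H ω (supportEdge hr a c h).1.1 (supportEdge hr a c h).1.2 :=
      fun h ω => ((hW.isSymm ω).apply_supportEdge hr h).symm
    have wick := hW.iIndepFun.integral_mul_mul_mul_eq_wick (fun p => hW.measurable _ _)
      (fun p => hW.integral_eq_zero _ _ p.2.2) (fun p => hW.integral_sq _ _ p.2.2)
      (fun p => hW.integral_pow_four _ _ p.2.2)
      (supportEdge hr i j h1) (supportEdge hr j k h2) (supportEdge hr k l h3)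
      (supportEdge hr l i h4)
    simp only [← entry] at wick
    rw [wick]
    simp only [supportEdge_eq_iff, supportIndicator, cyclePairings, h1, h2, h3, h4, if_true,
      one_mul]
    have e1 : s(i, j) = s(j, k) ∧ s(k, l) = s(l, i) ↔ i = k := by
      simp only [Sym2.eq_iff]; grind
    have e2 : s(i, j) = s(k, l) ∧ s(j, k) = s(l, i) ↔ i = k ∧ j = l := by
      simp only [Sym2.eq_iff]; grind
    have e3 : s(i, j) = s(l, i) ∧ s(j, k) = s(k, l) ↔ j = l := by
      simp only [Sym2.eq_iff]; grind
    simp only [e1, e2, e3]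
  · simp only [not_and_or] at hcycle
    rcases hcycle with h | h | h | h <;>
      simp [supportIndicator, h, fun ω => hW.eq_zero ω _ _ h]

theorem integrable_pow_four (hW : IsGaussianMomentWigner r H μ) (i j : n) :
    Integrable (fun ω => H ω i j ^ 4) μ := by
  by_cases h : r i j
  · exact Integrable.of_integral_ne_zero (by rw [hW.integral_pow_four i j h]; norm_num)
  · simp [fun ω => hW.eq_zero ω i j h]

theorem integrable_cycle (hW : IsGaussianMomentWigner r H μ) (i j k l : n) :
    Integrable (fun ω => H ω i j * H ω j k * H ω k l * H ω l i) μ := by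
  refine ((((hW.integrable_pow_four i j).add (hW.integrable_pow_four j k)).add
    (hW.integrable_pow_four k l)).add (hW.integrable_pow_four l i)).mono'
    (by have := hW.measurable; fun_prop) (ae_of_all _ fun ω => ?_)
  exact abs_mul_mul_mul_le_sum_pow_four _ _ _ _

theorem integral_trace_pow_four [Fintype n] [DecidableRel r] (hW : IsGaussianMomentWigner r H μ)
    (hr : ∀ i j, r i j → r j i) :
    ∫ ω, (H ω ^ 4).trace ∂μ = ∑ i, (2 * (#{j | r i j} : ℝ) ^ 2 + #{j | r i j}) := by
  have hint := hW.integrable_cycle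
  simp only [Matrix.trace_pow_four]
  simp (disch := intros; fun_prop) only [integral_finsetSum, hW.integral_cycle hr]
  rw [sum_cycle_mul_cyclePairings (supportIndicator r)
    (fun i j => if_congr ⟨hr i j, hr j i⟩ rfl rfl)
    (fun i j => by unfold supportIndicator; split_ifs <;> norm_num)]
  simp only [supportIndicator, sum_boole]

end IsGaussianMomentWigner

theorem sum_range_band_degree {M : Type*} [AddCommMonoid M] (G : ℕ → M) (c m : ℕ) :
    ∑ t ∈ range (c + m + c), G (min t c + min (c + m + c - 1 - t) c + 1)
      = 2 • ∑ t ∈ range c, G (c + 1 + t) + m • G (2 * c + 1) := by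
  rw [sum_range_add, sum_range_add]
  have left : ∀ t ∈ range c, G (min t c + min (c + m + c - 1 - t) c + 1) = G (c + 1 + t) :=
    fun t ht => by congr 1; simp only [mem_range] at ht; omega
  have middle : ∀ t ∈ range m, G (min (c + t) c + min (c + m + c - 1 - (c + t)) c + 1)
      = G (2 * c + 1) := fun t ht => by congr 1; simp only [mem_range] at ht; omega
  have right : ∀ t ∈ range c, G (min (c + m + t) c + min (c + m + c - 1 - (c + m + t)) c + 1)
      = G (c + 1 + (c - 1 - t)) := fun t ht => by congr 1; simp only [mem_range] at ht; omega
  rw [sum_congr rfl left, sum_congr rfl middle, sum_congr rfl right,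
    sum_range_reflect (fun t => G (c + 1 + t)), sum_const, card_range]
  abel

theorem card_band_row {N b : ℕ} (hb : 0 < b) (i : Fin N) :
    #{j : Fin N | |(i : ℤ) - j| < b} = min (i : ℕ) (b - 1) + min (N - 1 - i) (b - 1) + 1 := by
  have hfilter : (range N).filter (fun t : ℕ => |(i : ℤ) - t| < b)
      = Ico (i - (b - 1)) (min N (i + b)) := by
    ext t
    simp only [mem_filter, mem_range, mem_Ico, abs_lt]
    omega
  rw [card_filter, Fin.sum_univ_eq_sum_range (fun t => if |(i : ℤ) - t| < b then 1 else 0),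
    ← card_filter, hfilter, Nat.card_Ico]
  omega

theorem sum_range_two_mul_sq_add (a : ℝ) (n : ℕ) :
    ∑ t ∈ range n, (2 * (a + t) ^ 2 + (a + t))
      = 2 * n * a ^ 2 + n * a + (2 * a + 1 / 2) * n * (n - 1) + n * (n - 1) * (2 * n - 1) / 3 := by
  induction n with
  | zero => simp
  | succ n ih => rw [sum_range_succ, ih]; push_cast; ring

theorem sum_band_degree {N b : ℕ} (hb : 0 < b) (hN : 2 * b ≤ N + 2) :
    ∑ i : Fin N, (2 * (#{j : Fin N | |(i : ℤ) - j| < b} : ℝ) ^ 2 + #{j : Fin N | |(i : ℤ) - j| < b})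
      = (24 * (N : ℝ) * (b : ℝ) ^ 2 - 18 * (N : ℝ) * (b : ℝ) + 3 * (N : ℝ)
          - 20 * (b : ℝ) ^ 3 + 27 * (b : ℝ) ^ 2 - 7 * (b : ℝ)) / 3 := by
  simp only [card_band_row hb]
  obtain ⟨c, rfl⟩ : ∃ c, b = c + 1 := ⟨b - 1, by omega⟩
  obtain ⟨m, rfl⟩ : ∃ m, N = c + m + c := ⟨N - 2 * c, by omega⟩
  simp only [Nat.add_sub_cancel]
  rw [Fin.sum_univ_eq_sum_range (fun t =>
      2 * ((min t c + min (c + m + c - 1 - t) c + 1 : ℕ) : ℝ) ^ 2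
        + ((min t c + min (c + m + c - 1 - t) c + 1 : ℕ) : ℝ)),
    sum_range_band_degree (fun d => 2 * (d : ℝ) ^ 2 + d)]
  push_cast
  rw [sum_range_two_mul_sq_add]
  ring

theorem expectation_trace_pow_four_banded_general
    {Ω : Type*} [MeasureSpace Ω]
    (N b m : ℕ) (hm : 2 ≤ m) (hN : N = m * b) (hb : 1 ≤ b)
    (H : Ω → Matrix (Fin N) (Fin N) ℝ)
    (hmeas : ∀ i j, Measurable fun ω => H ω i j)
    (hsymm : ∀ ω, (H ω).IsSymm)
    (hband : ∀ ω, ∀ i j : Fin N, (b : ℤ) ≤ |(i : ℤ) - (j : ℤ)| → H ω i j = 0)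
    (hindep : iIndepFun
      (fun p : {p : Fin N × Fin N // p.1 ≤ p.2 ∧ |(p.1 : ℤ) - (p.2 : ℤ)| < b} =>
        fun ω => H ω p.1.1 p.1.2) ℙ)
    (hmean : ∀ i j : Fin N, |(i : ℤ) - (j : ℤ)| < b → ∫ ω, H ω i j = 0)
    (hvar : ∀ i j : Fin N, |(i : ℤ) - (j : ℤ)| < b → ∫ ω, (H ω i j) ^ 2 = 1)
    (hfourth : ∀ i j : Fin N, |(i : ℤ) - (j : ℤ)| < b → ∫ ω, (H ω i j) ^ 4 = 3) :
    ∫ ω, Matrix.trace ((H ω) ^ 4)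
      = (24 * (N : ℝ) * (b : ℝ) ^ 2 - 18 * (N : ℝ) * (b : ℝ) + 3 * (N : ℝ)
          - 20 * (b : ℝ) ^ 3 + 27 * (b : ℝ) ^ 2 - 7 * (b : ℝ)) / 3 := by
  have hW : IsGaussianMomentWigner (fun i j : Fin N => |(i : ℤ) - j| < b) H ℙ :=
    ⟨hmeas, hsymm, fun ω i j h => hband ω i j (not_lt.1 h), hindep, hmean, hvar, hfourth⟩
  have h2b : 2 * b ≤ N + 2 := by subst hN; nlinarith
  rw [hW.integral_trace_pow_four fun i j h => by rwa [abs_sub_comm], sum_band_degree hb h2b]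

/-- For a four-moment Gaussian-matching real symmetric banded Wigner matrix of size
N = m·b (m ≥ 2) and bandwidth b, E[tr(H⁴)] = (24Nb² − 18Nb + 3N − 20b³ + 27b² − 7b)/3. -/
theorem expectation_trace_pow_four_banded
    {Ω : Type*} [MeasureSpace Ω] [IsProbabilityMeasure (ℙ : Measure Ω)]
    (N b m : ℕ) (hm : 2 ≤ m) (hN : N = m * b) (hb : 1 ≤ b)
    (H : Ω → Matrix (Fin N) (Fin N) ℝ)
    (hmeas : ∀ i j, Measurable fun ω => H ω i j)
    (hsymm : ∀ ω, (H ω).IsSymm)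
    (hband : ∀ ω, ∀ i j : Fin N, (b : ℤ) ≤ |(i : ℤ) - (j : ℤ)| → H ω i j = 0)
    (hindep : iIndepFun
      (fun p : {p : Fin N × Fin N // p.1 ≤ p.2 ∧ |(p.1 : ℤ) - (p.2 : ℤ)| < b} =>
        fun ω => H ω p.1.1 p.1.2) ℙ)
    (hmean : ∀ i j : Fin N, |(i : ℤ) - (j : ℤ)| < b → ∫ ω, H ω i j = 0)
    (hvar : ∀ i j : Fin N, |(i : ℤ) - (j : ℤ)| < b → ∫ ω, (H ω i j) ^ 2 = 1)
    (hthird : ∀ i j : Fin N, |(i : ℤ) - (j : ℤ)| < b → ∫ ω, (H ω i j) ^ 3 = 0)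
    (hfourth : ∀ i j : Fin N, |(i : ℤ) - (j : ℤ)| < b → ∫ ω, (H ω i j) ^ 4 = 3) :
    ∫ ω, Matrix.trace ((H ω) ^ 4)
      = (24 * (N : ℝ) * (b : ℝ) ^ 2 - 18 * (N : ℝ) * (b : ℝ) + 3 * (N : ℝ)
          - 20 * (b : ℝ) ^ 3 + 27 * (b : ℝ) ^ 2 - 7 * (b : ℝ)) / 3 :=
  expectation_trace_pow_four_banded_general N b m hm hN hb H hmeas hsymm hband hindep hmean hvar
    hfourth
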